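/- For every δ > 0 there exist a time k_δ ∈ ℕ and a constant c > 0 such that for every token index i and every time k ≥ k_δ: if dist(z_i^k, S) > δ, then ‖z_i^{k+1}‖² ≥ ‖z_i^k‖² + c. That is, the squared norm of a token increases by a uniform positive amount whenever the token is outside the δ-neighborhood of S, after sufficiently many layers. -/

import Mathlib

open scoped RealInnerProductSpace BigOperators Classical
open Filter Metric

noncomputable section

/-- The hardmax attention (argmax) index set `C_i` for a token configuration `z`
(attention matrix `A = I`): the set of indices `j` maximizing `⟪z_i, z_j⟫`. -/
def attn {d n : ℕ} (z : Fin n → EuclideanSpace ℝ (Fin d)) (i : Fin n) : Finset (Fin n) :=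
  Finset.univ.filter fun j => (⟪z i, z j⟫ = ⨆ ℓ, ⟪z i, z ℓ⟫)

/-- The pure-attention hardmax transformer dynamics with step-size `α > 0` and `A = I`:
`z_i^{k+1} = z_i^k + (α/(1+α))·(1/|C_i^k|)·Σ_{j ∈ C_i^k} (z_j^k − z_i^k)`. -/
def IsDyn {d n : ℕ} (α : ℝ) (z : ℕ → Fin n → EuclideanSpace ℝ (Fin d)) : Prop :=
  ∀ k i, z (k + 1) i = z k i +
    (α / (1 + α)) • (((attn (z k) i).card : ℝ)⁻¹ • ∑ j ∈ attn (z k) i, (z k j - z k i))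

/-- The limiting set `K = ⋂ₖ co(Z^k)`, the intersection of the convex hulls of the token
configurations over all times. -/
def limitK {d n : ℕ} (z : ℕ → Fin n → EuclideanSpace ℝ (Fin d)) :
    Set (EuclideanSpace ℝ (Fin d)) :=
  ⋂ k, convexHull ℝ (Set.range (z k))

/-- The cluster set `S = { x ∈ K : max_{v ∈ V} ⟪v − x, x⟫ = 0 }`, where `V` is the set of
extreme points (vertices) of `K`; `max … = 0` is phrased as: `0` is the greatest element of
the set of values `⟪v − x, x⟫`, `v ∈ V`. -/
def clusterSet {d : ℕ} (K : Set (EuclideanSpace ℝ (Fin d))) :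
    Set (EuclideanSpace ℝ (Fin d)) :=
  {x ∈ K | IsGreatest ((fun v => ⟪v - x, x⟫) '' (Set.extremePoints ℝ K)) 0}

/-! The layer update moves `z_i` a fraction `α / (1 + α)` of the way to the centroid of its
argmax set. Hence every token stays in the previous convex hull, so the hulls `co(Z^k)` decrease to
the compact set `K`, and `‖z_i‖²` grows by at least `2α/(1+α)` times
`max_ℓ ⟪z_i, z_ℓ⟫ - ‖z_i‖² ≥ h_K(z_i) - ‖z_i‖²`, where `h_K` is the support function of `K`.
The gap `h_K(x) - ‖x‖²` is continuous, and at a point `x ∈ K` it vanishes only if `x` maximizes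
`⟪x, ·⟫` on `K`; the face of `K` exposed by `⟪x, ·⟫` then contains an extreme point `v` with
`⟪v - x, x⟫ = 0`, so `x ∈ S`. By compactness the gap is therefore bounded below by some `ε > 0`
on the points of `K` at distance `≥ δ` from `S`; as `co(Z^k)` eventually lies in any
neighbourhood of `K`, it is bounded below by `ε / 2` on the points of `co(Z^k)` at distance `≥ δ`
from `S` once `k` is large. -/

theorem exists_pos_lt_of_antitone_isCompact {X : Type*} [TopologicalSpace X] [T2Space X]
    {C : ℕ → Set X} (hC : Antitone C) (hCc : ∀ k, IsCompact (C k)) {A : Set X}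
    (hA : IsClosed A) {f : X → ℝ} (hf : Continuous f) (hpos : ∀ x ∈ ⋂ k, C k, x ∈ A → 0 < f x) :
    ∃ ε > 0, ∃ k₀, ∀ x ∈ C k₀, x ∈ A → ε < f x := by
  have hK : IsCompact (⋂ k, C k) :=
    (hCc 0).of_isClosed_subset (isClosed_iInter fun k => (hCc k).isClosed) (Set.iInter_subset C 0)
  obtain ⟨ε, hε, hεf⟩ :=
    (hK.inter_right hA).exists_forall_le' hf.continuousOn fun x hx => hpos x hx.1 hx.2
  have hU : IsOpen ({x | ε / 2 < f x} ∪ Aᶜ) := (isOpen_lt continuous_const hf).union hA.isOpen_compl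
  obtain ⟨k₀, hk₀⟩ := exists_subset_nhds_of_isCompact hC.directed_ge hCc fun x hx => by
    refine hU.mem_nhds ?_
    by_cases hxA : x ∈ A
    · exact Or.inl (show ε / 2 < f x by linarith [hεf x ⟨hx, hxA⟩])
    · exact Or.inr hxA
  exact ⟨ε / 2, half_pos hε, k₀, fun x hx hxA => (hk₀ hx).resolve_right (not_not.2 hxA)⟩

section SupportFunction

variable {E : Type*} [NormedAddCommGroup E] [InnerProductSpace ℝ E]

theorem inner_le_iSup_of_mem_convexHull {ι : Type*} [Finite ι] {w : ι → E} {y : E}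
    (hy : y ∈ convexHull ℝ (Set.range w)) (x : E) : ⟪x, y⟫ ≤ ⨆ ℓ, ⟪x, w ℓ⟫ := by
  obtain ⟨_, ⟨ℓ, rfl⟩, hℓ⟩ :=
    ((innerSL ℝ x).toLinearMap.convexOn convex_univ).exists_ge_of_mem_convexHull
      (Set.subset_univ _) hy
  exact hℓ.trans (le_ciSup (f := fun ℓ => ⟪x, w ℓ⟫) (Set.finite_range _).bddAbove ℓ)

theorem isCompact_convexHull_range {ι : Type*} [Finite ι] (w : ι → E) :
    IsCompact (convexHull ℝ (Set.range w)) :=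
  (Set.finite_range w).isCompact_convexHull (𝕜 := ℝ)

def supportFunction (K : Set E) (x : E) : ℝ :=
  sSup ((fun y => ⟪x, y⟫) '' K)

variable {K : Set E}

theorem le_supportFunction (hK : IsCompact K) {y : E} (hy : y ∈ K) (x : E) :
    ⟪x, y⟫ ≤ supportFunction K x :=
  le_csSup (hK.bddAbove_image (continuous_const.inner continuous_id).continuousOn) ⟨y, hy, rfl⟩

theorem continuous_supportFunction (hK : IsCompact K) : Continuous (supportFunction K) :=
  hK.continuous_sSup continuous_inner

theorem supportFunction_le_iSup {ι : Type*} [Finite ι] {w : ι → E} (hK : K.Nonempty)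
    (hKw : K ⊆ convexHull ℝ (Set.range w)) (x : E) : supportFunction K x ≤ ⨆ ℓ, ⟪x, w ℓ⟫ :=
  csSup_le (hK.image _)
    (Set.forall_mem_image.2 fun _ hy => inner_le_iSup_of_mem_convexHull (hKw hy) x)

theorem norm_sq_add_two_mul_le_norm_add_smul_sub_sq (x m : E) (θ : ℝ) :
    ‖x‖ ^ 2 + 2 * θ * (⟪x, m⟫ - ‖x‖ ^ 2) ≤ ‖x + θ • (m - x)‖ ^ 2 := by
  rw [norm_add_sq_real, real_inner_smul_right, inner_sub_right, real_inner_self_eq_norm_sq]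
  nlinarith [sq_nonneg ‖θ • (m - x)‖]

end SupportFunction

section ClusterSet

variable {d : ℕ} {K : Set (EuclideanSpace ℝ (Fin d))}

theorem mem_clusterSet_of_forall_inner_le (hK : IsCompact K) {x : EuclideanSpace ℝ (Fin d)}
    (hx : x ∈ K) (hmax : ∀ y ∈ K, ⟪x, y⟫ ≤ ‖x‖ ^ 2) : x ∈ clusterSet K := by
  set F := (innerSL ℝ x).toExposed K
  have hF : IsExposed ℝ K F := ContinuousLinearMap.toExposed.isExposed
  have hxF : x ∈ F := ⟨hx, fun y hy => by
    simpa only [innerSL_apply_apply, real_inner_self_eq_norm_sq] using hmax y hy⟩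
  obtain ⟨v, hvF, hvext⟩ := (hF.isCompact hK).extremePoints_nonempty ⟨x, hxF⟩
  have hle : ∀ y ∈ K, ⟪y - x, x⟫ ≤ 0 := fun y hy => by
    rw [inner_sub_left, real_inner_comm x y, real_inner_self_eq_norm_sq]
    linarith [hmax y hy]
  have hv : ⟪v - x, x⟫ = 0 := by
    refine le_antisymm (hle v hvF.1) ?_
    rw [inner_sub_left, real_inner_comm x v, sub_nonneg]
    exact hvF.2 x hx
  refine ⟨hx, ⟨v, hF.isExtreme.extremePoints_subset_extremePoints ⟨hvF, hvext⟩, hv⟩, ?_⟩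
  rintro _ ⟨u, hu, rfl⟩
  exact hle u hu.1

theorem norm_sq_lt_supportFunction (hK : IsCompact K) {x : EuclideanSpace ℝ (Fin d)}
    (hx : x ∈ K) (hxS : x ∉ clusterSet K) : ‖x‖ ^ 2 < supportFunction K x := by
  contrapose! hxS
  exact mem_clusterSet_of_forall_inner_le hK hx fun y hy => (le_supportFunction hK hy x).trans hxS

end ClusterSet

section Dynamics

variable {d n : ℕ}

theorem attn_nonempty (z : Fin n → EuclideanSpace ℝ (Fin d)) (i : Fin n) :
    (attn z i).Nonempty := by
  have : Nonempty (Fin n) := ⟨i⟩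
  obtain ⟨j, hj⟩ := Finite.exists_max fun ℓ => ⟪z i, z ℓ⟫
  exact ⟨j, Finset.mem_filter.2 ⟨Finset.mem_univ j,
    le_antisymm (le_ciSup (f := fun ℓ => ⟪z i, z ℓ⟫) (Set.finite_range _).bddAbove j)
      (ciSup_le hj)⟩⟩

def attnMean (z : Fin n → EuclideanSpace ℝ (Fin d)) (i : Fin n) : EuclideanSpace ℝ (Fin d) :=
  (attn z i).centerMass (fun _ => (1 : ℝ)) z

theorem attnMean_mem_convexHull (z : Fin n → EuclideanSpace ℝ (Fin d)) (i : Fin n) :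
    attnMean z i ∈ convexHull ℝ (Set.range z) :=
  Finset.centerMass_mem_convexHull _ (fun _ _ => zero_le_one)
    (by simpa using attn_nonempty z i) fun j _ => Set.mem_range_self j

theorem inner_attnMean (z : Fin n → EuclideanSpace ℝ (Fin d)) (i : Fin n) :
    ⟪z i, attnMean z i⟫ = ⨆ ℓ, ⟪z i, z ℓ⟫ := by
  have hcard : ((attn z i).card : ℝ) ≠ 0 := by exact_mod_cast (attn_nonempty z i).card_ne_zero
  have hmax : ∀ j ∈ attn z i, ⟪z i, z j⟫ = ⨆ ℓ, ⟪z i, z ℓ⟫ := fun j hj => (Finset.mem_filter.1 hj).2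
  simp only [attnMean, Finset.centerMass, one_smul, Finset.sum_const, nsmul_eq_mul, mul_one,
    real_inner_smul_right, inner_sum, Finset.sum_congr rfl hmax]
  field_simp

variable {α : ℝ} {z : ℕ → Fin n → EuclideanSpace ℝ (Fin d)}

theorem IsDyn.eq_add_smul_attnMean (hdyn : IsDyn α z) (k : ℕ) (i : Fin n) :
    z (k + 1) i = z k i + (α / (1 + α)) • (attnMean (z k) i - z k i) := by
  have hcard : ((attn (z k) i).card : ℝ) ≠ 0 := by
    exact_mod_cast (attn_nonempty (z k) i).card_ne_zero
  rw [hdyn k i, Finset.sum_sub_distrib, Finset.sum_const, smul_sub, ← Nat.cast_smul_eq_nsmul ℝ,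
    smul_smul, inv_mul_cancel₀ hcard, one_smul]
  simp [attnMean, Finset.centerMass]

theorem IsDyn.mem_convexHull_succ (hα : 0 < α) (hdyn : IsDyn α z) (k : ℕ) (i : Fin n) :
    z (k + 1) i ∈ convexHull ℝ (Set.range (z k)) := by
  rw [hdyn.eq_add_smul_attnMean]
  exact (convex_convexHull ℝ _).add_smul_sub_mem (subset_convexHull ℝ _ (Set.mem_range_self i))
    (attnMean_mem_convexHull _ _) ⟨by positivity, div_le_one_of_le₀ (by linarith) (by positivity)⟩

theorem IsDyn.antitone_convexHull (hα : 0 < α) (hdyn : IsDyn α z) :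
    Antitone fun k => convexHull ℝ (Set.range (z k)) :=
  antitone_nat_of_succ_le fun k =>
    convexHull_min (Set.range_subset_iff.2 (hdyn.mem_convexHull_succ hα k)) (convex_convexHull ℝ _)

theorem IsDyn.norm_sq_add_le (hdyn : IsDyn α z) (k : ℕ) (i : Fin n) :
    ‖z k i‖ ^ 2 + 2 * (α / (1 + α)) * ((⨆ ℓ, ⟪z k i, z k ℓ⟫) - ‖z k i‖ ^ 2) ≤
      ‖z (k + 1) i‖ ^ 2 := by
  rw [hdyn.eq_add_smul_attnMean, ← inner_attnMean]
  exact norm_sq_add_two_mul_le_norm_add_smul_sub_sq _ _ _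

theorem isCompact_limitK (z : ℕ → Fin n → EuclideanSpace ℝ (Fin d)) : IsCompact (limitK z) :=
  (isCompact_convexHull_range (z 0)).of_isClosed_subset
    (isClosed_iInter fun k => (isCompact_convexHull_range (z k)).isClosed)
    (Set.iInter_subset _ 0)

theorem IsDyn.limitK_nonempty [Nonempty (Fin n)] (hα : 0 < α) (hdyn : IsDyn α z) :
    (limitK z).Nonempty :=
  IsCompact.nonempty_iInter_of_sequence_nonempty_isCompact_isClosed _
    (fun k => hdyn.antitone_convexHull hα k.le_succ)
    (fun _ => (Set.range_nonempty _).mono (subset_convexHull ℝ _))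
    (isCompact_convexHull_range (z 0))
    fun k => (isCompact_convexHull_range (z k)).isClosed

end Dynamics

theorem sq_norm_strict_growth_away_from_clusterSet_general {d n : ℕ} (α : ℝ) (hα : 0 < α)
    (z : ℕ → Fin n → EuclideanSpace ℝ (Fin d)) (hdyn : IsDyn α z) :
    ∀ δ : ℝ, 0 < δ → ∃ (kδ : ℕ) (c : ℝ), 0 < c ∧
      ∀ (i : Fin n) (k : ℕ), kδ ≤ k →
        δ < infDist (z k i) (clusterSet (limitK z)) →
        ‖z k i‖ ^ 2 + c ≤ ‖z (k + 1) i‖ ^ 2 := by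
  intro δ hδ
  set K := limitK z
  have hK : IsCompact K := isCompact_limitK z
  have hgap : ∀ x ∈ K, δ ≤ infDist x (clusterSet K) → 0 < supportFunction K x - ‖x‖ ^ 2 :=
    fun x hxK hxδ => sub_pos.2 <| norm_sq_lt_supportFunction hK hxK fun hxS => by
      linarith [infDist_zero_of_mem hxS]
  obtain ⟨ε, hε, kδ, hkδ⟩ := exists_pos_lt_of_antitone_isCompact (hdyn.antitone_convexHull hα)
    (fun k => isCompact_convexHull_range (z k))
    (isClosed_le continuous_const (continuous_infDist_pt _))
    (f := fun x => supportFunction K x - ‖x‖ ^ 2)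
    ((continuous_supportFunction hK).sub (continuous_norm.pow 2)) hgap
  refine ⟨kδ, 2 * (α / (1 + α)) * ε, by positivity, fun i k hk hfar => ?_⟩
  have : Nonempty (Fin n) := ⟨i⟩
  have hxε := hkδ (z k i) (hdyn.antitone_convexHull hα hk (subset_convexHull ℝ _ ⟨i, rfl⟩)) hfar.le
  have hsupp := supportFunction_le_iSup (hdyn.limitK_nonempty hα) (Set.iInter_subset _ k) (z k i)
  calc ‖z k i‖ ^ 2 + 2 * (α / (1 + α)) * ε
      ≤ ‖z k i‖ ^ 2 + 2 * (α / (1 + α)) * ((⨆ ℓ, ⟪z k i, z k ℓ⟫) - ‖z k i‖ ^ 2) := by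
        gcongr
        linarith
    _ ≤ ‖z (k + 1) i‖ ^ 2 := hdyn.norm_sq_add_le k i

/-- After sufficiently many layers, the squared norm of a token increases by a uniform
positive amount whenever the token lies outside the `δ`-neighborhood of `S`. -/
theorem sq_norm_strict_growth_away_from_clusterSet {d n : ℕ} (hd : 0 < d) (hn : 0 < n) (α : ℝ) (hα : 0 < α)
    (z : ℕ → Fin n → EuclideanSpace ℝ (Fin d)) (hdyn : IsDyn α z)
    (hdist : ∀ i j : Fin n, i ≠ j → z 0 i ≠ z 0 j) (hnz : ∀ i, z 0 i ≠ 0) :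
    ∀ δ : ℝ, 0 < δ → ∃ (kδ : ℕ) (c : ℝ), 0 < c ∧
      ∀ (i : Fin n) (k : ℕ), kδ ≤ k →
        δ < infDist (z k i) (clusterSet (limitK z)) →
        ‖z k i‖ ^ 2 + c ≤ ‖z (k + 1) i‖ ^ 2 :=
  sq_norm_strict_growth_away_from_clusterSet_general α hα z hdyn

end
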